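/- Let K ∈ B(H) and F : Ω → H be a continuous K-frame with bounds 0 < A ≤ B. Then for every X ∈ B(H), F is a continuous (K ∘ X)-frame: for all u ∈ H, (A / max(‖X‖², 1))·‖(K ∘ X)* u‖² ≤ ∫_Ω |⟪F ω, u⟫|² dμ(ω) ≤ B·‖u‖². Moreover, if θ is the transform operator of F and G ∈ B(H, L²(Ω, 𝕜)) is a K-dual mapping to F (i.e. K = θ* ∘ G), then G ∘ X is a (K ∘ X)-dual mapping to F (i.e. K ∘ X = θ* ∘ (G ∘ X)). -/

import Mathlib

open MeasureTheory ContinuousLinearMap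

section

variable {𝕜 E F G : Type*} [RCLike 𝕜]
  [NormedAddCommGroup E] [InnerProductSpace 𝕜 E] [CompleteSpace E]
  [NormedAddCommGroup F] [InnerProductSpace 𝕜 F] [CompleteSpace F]
  [NormedAddCommGroup G] [InnerProductSpace 𝕜 G] [CompleteSpace G]

theorem norm_adjoint_comp_apply_le (K : F →L[𝕜] G) (X : E →L[𝕜] F) (u : G) :
    ‖adjoint (K.comp X) u‖ ≤ ‖X‖ * ‖adjoint K u‖ := by
  rw [adjoint_comp, comp_apply, ← LinearIsometryEquiv.norm_map adjoint X]
  exact le_opNorm _ _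

theorem norm_adjoint_comp_apply_sq_le_max (K : F →L[𝕜] G) (X : E →L[𝕜] F) (u : G) :
    ‖adjoint (K.comp X) u‖ ^ 2 ≤ max (‖X‖ ^ 2) 1 * ‖adjoint K u‖ ^ 2 :=
  calc ‖adjoint (K.comp X) u‖ ^ 2 ≤ (‖X‖ * ‖adjoint K u‖) ^ 2 := by
        gcongr; exact norm_adjoint_comp_apply_le K X u
    _ = ‖X‖ ^ 2 * ‖adjoint K u‖ ^ 2 := mul_pow _ _ _
    _ ≤ max (‖X‖ ^ 2) 1 * ‖adjoint K u‖ ^ 2 := by gcongr; exact le_max_left _ _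

end

section

variable {𝕜 H Ω : Type*} [RCLike 𝕜]
  [NormedAddCommGroup H] [InnerProductSpace 𝕜 H] [CompleteSpace H] [MeasurableSpace Ω]

def HasContinuousKFrameBounds (K : H →L[𝕜] H) (F : Ω → H) (μ : Measure Ω) (A B : ℝ) : Prop :=
  ∀ u : H,
    A * ‖adjoint K u‖ ^ 2 ≤ ∫ ω, ‖(inner 𝕜 (F ω) u : 𝕜)‖ ^ 2 ∂μ ∧
    ∫ ω, ‖(inner 𝕜 (F ω) u : 𝕜)‖ ^ 2 ∂μ ≤ B * ‖u‖ ^ 2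

theorem HasContinuousKFrameBounds.of_norm_adjoint_sq_le {K L : H →L[𝕜] H} {F : Ω → H}
    {μ : Measure Ω} {A B c : ℝ} (h : HasContinuousKFrameBounds K F μ A B) (hA : 0 ≤ A)
    (hc : 0 < c) (hLK : ∀ u, ‖adjoint L u‖ ^ 2 ≤ c * ‖adjoint K u‖ ^ 2) :
    HasContinuousKFrameBounds L F μ (A / c) B := fun u =>
  ⟨calc A / c * ‖adjoint L u‖ ^ 2 ≤ A / c * (c * ‖adjoint K u‖ ^ 2) := by gcongr; exact hLK u
      _ = A * ‖adjoint K u‖ ^ 2 := by field_simp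
      _ ≤ _ := (h u).1,
    (h u).2⟩

theorem HasContinuousKFrameBounds.comp {K : H →L[𝕜] H} {F : Ω → H} {μ : Measure Ω} {A B : ℝ}
    (h : HasContinuousKFrameBounds K F μ A B) (hA : 0 ≤ A) (X : H →L[𝕜] H) :
    HasContinuousKFrameBounds (K.comp X) F μ (A / max (‖X‖ ^ 2) 1) B :=
  h.of_norm_adjoint_sq_le hA (lt_max_of_lt_right one_pos)
    (norm_adjoint_comp_apply_sq_le_max K X)

end

theorem continuous_K_frame_comp
    {𝕜 : Type*} [RCLike 𝕜]
    {H : Type*} [NormedAddCommGroup H] [InnerProductSpace 𝕜 H] [CompleteSpace H]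
    {Ω : Type*} [MeasurableSpace Ω] {μ : Measure Ω}
    (K : H →L[𝕜] H) (F : Ω → H) (A B : ℝ) (hA : 0 < A)
    (hframe : ∀ u : H,
      A * ‖ContinuousLinearMap.adjoint K u‖ ^ 2 ≤ ∫ ω, ‖(inner 𝕜 (F ω) u : 𝕜)‖ ^ 2 ∂μ ∧
      ∫ ω, ‖(inner 𝕜 (F ω) u : 𝕜)‖ ^ 2 ∂μ ≤ B * ‖u‖ ^ 2)
    (X : H →L[𝕜] H) :
    (∀ u : H,
      (A / max (‖X‖ ^ 2) 1) * ‖ContinuousLinearMap.adjoint (K.comp X) u‖ ^ 2 ≤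
        ∫ ω, ‖(inner 𝕜 (F ω) u : 𝕜)‖ ^ 2 ∂μ ∧
      ∫ ω, ‖(inner 𝕜 (F ω) u : 𝕜)‖ ^ 2 ∂μ ≤ B * ‖u‖ ^ 2) ∧
    (∀ θ : H →L[𝕜] Lp 𝕜 2 μ,
      (∀ u : H, (θ u : Ω → 𝕜) =ᵐ[μ] fun ω => (inner 𝕜 (F ω) u : 𝕜)) →
      ∀ G : H →L[𝕜] Lp 𝕜 2 μ, K = (ContinuousLinearMap.adjoint θ).comp G →
        K.comp X = (ContinuousLinearMap.adjoint θ).comp (G.comp X)) :=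
  ⟨HasContinuousKFrameBounds.comp hframe hA.le X,
    fun θ _ G hK => by rw [hK, comp_assoc]⟩
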